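/- An almost paracontact structure (ψ, ζ, τ) on a manifold M is normal — i.e. the natural almost paracomplex structure J on M × S¹ defined by J(X, f·d/dt) = (ψX + fζ, τ(X)·d/dt) is integrable — if and only if the Nijenhuis torsion of ψ satisfies [ψ,ψ] − 2dτ⊗ζ = 0; moreover vanishing of K^(1) = [ψ,ψ] − 2dτ⊗ζ implies vanishing of K^(2)(X,Y) = (L_{ψX}τ)(Y) − (L_{ψY}τ)(X), of K^(3) = L_ζψ and of K^(4) = L_ζτ. -/
import Mathlib


noncomputable section

/-!
An abstract model of smooth geometry: `F` plays the role of the algebra of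
smooth real-valued functions on a manifold `M`, `V` plays the role of the
`C^∞(M)`-module of smooth vector fields on `M` (with its Lie bracket), and
`D X f` represents the directional derivative of the function `f` along the
vector field `X`.
-/
structure SmoothSetting (F V : Type*) [CommRing F] [Algebra ℝ F]
    [LieRing V] [Module F V] [Module ℝ V] [IsScalarTower ℝ F V] where
  D : V → F → F
  D_add : ∀ (X : V) (f g : F), D X (f + g) = D X f + D X g
  D_mul : ∀ (X : V) (f g : F), D X (f * g) = f * D X g + g * D X f
  D_addX : ∀ (X Y : V) (f : F), D (X + Y) f = D X f + D Y f
  D_smulX : ∀ (f : F) (X : V) (k : F), D (f • X) k = f * D X k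
  D_bracket : ∀ (X Y : V) (f : F), D ⁅X, Y⁆ f = D X (D Y f) - D Y (D X f)
  bracket_smul : ∀ (f : F) (X Y : V), ⁅X, f • Y⁆ = f • ⁅X, Y⁆ + D X f • Y

/-- An almost paracontact structure, modelled abstractly: a triple
`(ψ, ζ, τ)` where `ψ` is a `(1,1)`-tensor field, `ζ` a vector field and `τ` a
one-form, with `ψ² = Id - τ ⊗ ζ`, `τ(ζ) = 1` (and the standard consequent
identities `ψζ = 0`, `τ ∘ ψ = 0`). -/
structure APCS (F V : Type*) [CommRing F] [Algebra ℝ F]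
    [LieRing V] [Module F V] [Module ℝ V] [IsScalarTower ℝ F V]
    extends SmoothSetting F V where
  psi : V → V
  zeta : V
  tau : V → F
  psi_add : ∀ X Y : V, psi (X + Y) = psi X + psi Y
  psi_smul : ∀ (f : F) (X : V), psi (f • X) = f • psi X
  tau_add : ∀ X Y : V, tau (X + Y) = tau X + tau Y
  tau_smul : ∀ (f : F) (X : V), tau (f • X) = f * tau X
  psi_psi : ∀ X : V, psi (psi X) = X - tau X • zeta
  tau_zeta : tau zeta = 1
  psi_zeta : psi zeta = 0
  tau_psi : ∀ X : V, tau (psi X) = 0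

namespace APCS

variable {F V : Type*} [CommRing F] [Algebra ℝ F]
  [LieRing V] [Module F V] [Module ℝ V] [IsScalarTower ℝ F V]
variable (A : APCS F V)

/-- The exterior derivative `dτ`, via the coboundary formula
`2 dτ(X,Y) = X τ(Y) - Y τ(X) - τ([X,Y])`. -/
def dTau (X Y : V) : F :=
  ((1:ℝ)/2) • (A.D X (A.tau Y) - A.D Y (A.tau X) - A.tau ⁅X, Y⁆)

/-- The Nijenhuis torsion `[ψ,ψ](X,Y)`. -/
def nijPsi (X Y : V) : V :=
  A.psi (A.psi ⁅X, Y⁆) + ⁅A.psi X, A.psi Y⁆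
    - A.psi ⁅A.psi X, Y⁆ - A.psi ⁅X, A.psi Y⁆

/-- The tensor `K⁽¹⁾(X,Y) = [ψ,ψ](X,Y) - 2 dτ(X,Y) ζ`. -/
def K1 (X Y : V) : V := A.nijPsi X Y - (2 * A.dTau X Y) • A.zeta

/-- The tensor `K⁽²⁾(X,Y) = (L_{ψX} τ)(Y) - (L_{ψY} τ)(X)`. -/
def K2 (X Y : V) : F :=
  (A.D (A.psi X) (A.tau Y) - A.tau ⁅A.psi X, Y⁆)
    - (A.D (A.psi Y) (A.tau X) - A.tau ⁅A.psi Y, X⁆)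

/-- The Lie derivative `K⁽³⁾(X) = (L_ζ ψ)(X)`. -/
def K3 (X : V) : V := ⁅A.zeta, A.psi X⁆ - A.psi ⁅A.zeta, X⁆

/-- The Lie derivative `K⁽⁴⁾(X) = (L_ζ τ)(X)`. -/
def K4 (X : V) : F := A.D A.zeta (A.tau X) - A.tau ⁅A.zeta, X⁆

/-!
Vector fields on the product `M × S¹` of the form `X + f·d/dt` (with `X` a
vector field on `M` and `f` a function on `M`) are modelled as pairs
`(X, f) : V × F`; their Lie bracket is
`[(X,f), (Y,k)] = ([X,Y], X k - Y f)`.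
-/

/-- The Lie bracket of vector fields `X + f·d/dt` on `M × S¹`. -/
def pBracket (a b : V × F) : V × F := (⁅a.1, b.1⁆, A.D a.1 b.2 - A.D b.1 a.2)

/-- The natural almost paracomplex structure `J` on `M × S¹`:
`J(X, f·d/dt) = (ψX + fζ, τ(X)·d/dt)`. -/
def J (a : V × F) : V × F := (A.psi a.1 + a.2 • A.zeta, A.tau a.1)

/-- The Nijenhuis torsion `[J,J]` of the almost paracomplex structure `J` on
`M × S¹`; by Walker's theorem, `J` is integrable iff `[J,J] = 0`. -/
def nijJ (a b : V × F) : V × F :=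
  A.J (A.J (A.pBracket a b)) + A.pBracket (A.J a) (A.J b)
    - A.J (A.pBracket (A.J a) b) - A.J (A.pBracket a (A.J b))

/-- The almost paracontact structure is normal: the almost paracomplex
structure `J` on `M × S¹` is integrable, i.e. `[J,J] = 0`. -/
def NormalJ : Prop := ∀ a b : V × F, A.nijJ a b = 0

end APCS

namespace APCS

variable {F V : Type*} [CommRing F] [Algebra ℝ F]
  [LieRing V] [Module F V] [Module ℝ V] [IsScalarTower ℝ F V]
variable (A : APCS F V)

lemma D_zero (X : V) : A.D X 0 = 0 := by
  have h := A.D_add X 0 0; simpa using h.symm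

lemma D_one (X : V) : A.D X 1 = 0 := by
  have h := A.D_mul X 1 1
  simp only [mul_one, one_mul] at h
  exact (left_eq_add.mp h)

lemma D_neg (X : V) (f : F) : A.D X (-f) = -A.D X f := by
  have h := A.D_add X f (-f)
  simp only [add_neg_cancel, A.D_zero] at h
  linear_combination -h

lemma D_sub (X : V) (f g : F) : A.D X (f - g) = A.D X f - A.D X g := by
  rw [sub_eq_add_neg, A.D_add, A.D_neg, sub_eq_add_neg]

lemma psi_zero : A.psi 0 = 0 := by
  have h := A.psi_add 0 0; simpa using h.symm

lemma psi_neg (X : V) : A.psi (-X) = -A.psi X := by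
  have h := A.psi_add X (-X)
  simp only [add_neg_cancel, A.psi_zero] at h
  exact (neg_eq_of_add_eq_zero_right h.symm).symm

lemma psi_sub (X Y : V) : A.psi (X - Y) = A.psi X - A.psi Y := by
  rw [sub_eq_add_neg, A.psi_add, A.psi_neg, sub_eq_add_neg]

lemma tau_zero : A.tau 0 = 0 := by
  have h := A.tau_add 0 0; simpa using h.symm

lemma tau_neg (X : V) : A.tau (-X) = -A.tau X := by
  have h := A.tau_add X (-X)
  simp only [add_neg_cancel, A.tau_zero] at h
  linear_combination -h

lemma tau_sub (X Y : V) : A.tau (X - Y) = A.tau X - A.tau Y := by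
  rw [sub_eq_add_neg, A.tau_add, A.tau_neg, sub_eq_add_neg]

lemma smul_bracket (f : F) (X Y : V) :
    ⁅f • X, Y⁆ = f • ⁅X, Y⁆ - A.D Y f • X := by
  rw [← lie_skew, A.bracket_smul, ← lie_skew X Y]
  module

lemma two_mul_half (x : F) : (2 : F) * ((1/2 : ℝ) • x) = x := by
  rw [Algebra.smul_def]
  have h2 : (2 : F) = algebraMap ℝ F 2 := (map_ofNat (algebraMap ℝ F) 2).symm
  rw [h2, ← mul_assoc, ← map_mul]
  norm_num

end APCS

namespace APCS

variable {F V : Type*} [CommRing F] [Algebra ℝ F]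
  [LieRing V] [Module F V] [Module ℝ V] [IsScalarTower ℝ F V]
variable (A : APCS F V)

lemma K1_eq (X Y : V) : A.K1 X Y =
    A.nijPsi X Y
      - (A.D X (A.tau Y) - A.D Y (A.tau X) - A.tau ⁅X, Y⁆) • A.zeta := by
  rw [K1, dTau, two_mul_half]

lemma nijJ_formula (X Y : V) (f k : F) :
    A.nijJ (X, f) (Y, k) =
      (A.K1 X Y + f • A.K3 Y - k • A.K3 X,
       A.K2 X Y + f * A.K4 Y - k * A.K4 X) := by
  simp only [nijJ, J, pBracket, K1_eq, nijPsi, K2, K3, K4,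
    Prod.mk_add_mk, Prod.mk_sub_mk, Prod.mk.injEq]
  constructor
  · simp only [lie_add, add_lie, A.bracket_smul, A.smul_bracket, lie_self,
      A.psi_add, A.psi_smul, A.psi_psi, A.psi_zeta, A.psi_zero, A.psi_sub, A.psi_neg,
      A.tau_add, A.tau_smul, A.tau_psi, A.tau_zeta, A.tau_zero,
      A.D_add, A.D_addX, A.D_smulX, A.D_zero, A.D_one, A.D_sub,
      smul_zero, zero_smul, smul_add, smul_sub, mul_one, mul_zero,
      add_zero, zero_add, smul_neg, neg_smul, sub_zero, zero_sub, lie_zero,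
      zero_lie,
      show ∀ W : V, ⁅W, A.zeta⁆ = -⁅A.zeta, W⁆ from
        fun W => (lie_skew _ _).symm]
    module
  · simp only [lie_add, add_lie, A.bracket_smul, A.smul_bracket, lie_self,
      A.psi_add, A.psi_smul, A.psi_psi, A.psi_zeta, A.psi_zero, A.psi_sub, A.psi_neg,
      A.tau_add, A.tau_smul, A.tau_psi, A.tau_zeta, A.tau_zero, A.tau_neg,
      A.tau_sub,
      A.D_add, A.D_addX, A.D_smulX, A.D_zero, A.D_one, A.D_sub,
      smul_zero, zero_smul, smul_add, smul_sub, mul_one, mul_zero,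
      add_zero, zero_add, smul_neg, neg_smul, sub_zero, zero_sub, lie_zero,
      zero_lie,
      show ∀ W : V, ⁅W, A.zeta⁆ = -⁅A.zeta, W⁆ from
        fun W => (lie_skew _ _).symm,
      show ⁅A.psi Y, X⁆ = -⁅X, A.psi Y⁆ from (lie_skew _ _).symm]
    ring

end APCS

namespace APCS

variable {F V : Type*} [CommRing F] [Algebra ℝ F]
  [LieRing V] [Module F V] [Module ℝ V] [IsScalarTower ℝ F V]
variable (A : APCS F V)

lemma K4_eq' (X : V) : A.K4 X = -A.tau (A.K1 A.zeta X) := by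
  simp only [K1_eq, nijPsi, K4, A.psi_zeta, zero_lie, lie_zero, A.psi_zero,
    A.psi_psi, A.tau_sub, A.tau_add, A.tau_smul, A.tau_psi, A.tau_zeta,
    A.tau_zero, A.tau_neg, A.D_one, A.D_zero]
  ring

lemma K3_eq' (X : V) :
    A.K3 X = -(A.K4 (A.psi X)) • A.zeta - A.psi (A.K1 A.zeta X) := by
  simp only [K1_eq, nijPsi, K3, K4, A.psi_zeta, zero_lie, lie_zero,
    A.psi_zero, A.psi_psi, A.psi_sub, A.psi_add, A.psi_neg, A.psi_smul,
    A.tau_sub, A.tau_add, A.tau_smul, A.tau_psi, A.tau_zeta, A.tau_zero,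
    A.tau_neg, A.D_one, A.D_zero, smul_zero, zero_smul, sub_zero, zero_sub,
    mul_one, mul_zero]
  module

lemma K2_eq' (X Y : V) :
    A.K2 X Y = -A.tau (A.K1 X (A.psi Y)) - A.tau Y * A.K4 (A.psi X) := by
  simp only [K1_eq, nijPsi, K2, K4, A.psi_psi, A.psi_sub, A.psi_add,
    A.psi_neg, A.psi_smul, A.psi_zeta, A.psi_zero, lie_add, add_lie, lie_sub,
    sub_lie, A.bracket_smul, A.smul_bracket, lie_zero, zero_lie,
    A.tau_sub, A.tau_add, A.tau_smul, A.tau_psi, A.tau_zeta, A.tau_zero,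
    A.tau_neg, A.D_one, A.D_zero, A.D_sub, A.D_add, A.D_addX, A.D_smulX,
    smul_zero, zero_smul, smul_add, smul_sub, mul_one, mul_zero, add_zero,
    zero_add, smul_neg, neg_smul, sub_zero, zero_sub,
    show ∀ W : V, ⁅W, A.zeta⁆ = -⁅A.zeta, W⁆ from
      fun W => (lie_skew _ _).symm,
    show ⁅A.psi Y, X⁆ = -⁅X, A.psi Y⁆ from (lie_skew _ _).symm]
  ring

end APCS


/-- An almost paracontact structure `(ψ, ζ, τ)` on `M` is normal
— i.e. the natural almost paracomplex structure `J` on `M × S¹`, given by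
`J(X, f·d/dt) = (ψX + fζ, τ(X)·d/dt)`, is integrable (equivalently, by
Walker's theorem, `[J,J] = 0`) — if and only if
`K⁽¹⁾ = [ψ,ψ] - 2dτ ⊗ ζ = 0`; moreover vanishing of `K⁽¹⁾` implies vanishing
of `K⁽²⁾`, `K⁽³⁾ = L_ζψ` and `K⁽⁴⁾ = L_ζτ`. -/
theorem normal_iff_K1_eq_zero
    {F V : Type*} [CommRing F] [Algebra ℝ F]
    [LieRing V] [Module F V] [Module ℝ V] [IsScalarTower ℝ F V]
    (A : APCS F V) :
    (A.NormalJ ↔ ∀ X Y : V, A.K1 X Y = 0) ∧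
    ((∀ X Y : V, A.K1 X Y = 0) →
      (∀ X Y : V, A.K2 X Y = 0) ∧ (∀ X : V, A.K3 X = 0) ∧
      (∀ X : V, A.K4 X = 0)) := by
  have key : (∀ X Y : V, A.K1 X Y = 0) →
      (∀ X Y : V, A.K2 X Y = 0) ∧ (∀ X : V, A.K3 X = 0) ∧
      (∀ X : V, A.K4 X = 0) := by
    intro h
    have hK4 : ∀ X : V, A.K4 X = 0 := fun X => by
      rw [A.K4_eq', h, A.tau_zero, neg_zero]
    have hK3 : ∀ X : V, A.K3 X = 0 := fun X => by
      rw [A.K3_eq', h, hK4, A.psi_zero, neg_zero, zero_smul, sub_zero]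
    have hK2 : ∀ X Y : V, A.K2 X Y = 0 := fun X Y => by
      rw [A.K2_eq', h, hK4, A.tau_zero, mul_zero, neg_zero, sub_zero]
    exact ⟨hK2, hK3, hK4⟩
  refine ⟨⟨fun h X Y => ?_, fun h a b => ?_⟩, key⟩
  · have h0 := h (X, (0 : F)) (Y, (0 : F))
    rw [A.nijJ_formula] at h0
    have h1 := congrArg Prod.fst h0
    simpa using h1
  · obtain ⟨hK2, hK3, hK4⟩ := key h
    obtain ⟨X, f⟩ := a
    obtain ⟨Y, k⟩ := b
    rw [A.nijJ_formula]
    simp [h, hK2, hK3, hK4, Prod.ext_iff]
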